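/- Second derivative of the entropy rate at ε = 1/2 (Section 3.3, case 4): define R_n(δ) = ∑_{(z_1,…,z_n)∈{0,1}^n} p_Z^δ(z_1⋯z_n) log p_Z^δ(z_1⋯z_n) and assume the entropy rate H(δ) = lim_{n→∞} −R_n(δ)/n exists for every δ ∈ (−1/2,1/2), and that the first, second, and third derivatives in δ of −R_n(δ)/n are bounded uniformly in n and in δ on a neighborhood of δ = 0. Then H is twice differentiable at δ = 0 and H″(0) = −4 ( (π_10 − π_01)/(π_10 + π_01) )²; i.e., the second derivative of the entropy rate with respect to the crossover probability at ε = 1/2 equals −4((π_10−π_01)/(π_10+π_01))². -/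

import Mathlib

/-- Stationary probability of symbol `0` (coded `false`): `p_X(0) = π_10/(π_01+π_10)`. -/
noncomputable def pX (π01 π10 : ℝ) (b : Bool) : ℝ :=
  if b then π01 / (π01 + π10) else π10 / (π01 + π10)

/-- `p_Z^δ(z_1⋯z_n)`: the probability that the first `n` outputs of the stationary Markov
chain with transition matrix `Π` observed through a binary symmetric channel with crossover
probability `ε = 1/2 − δ` equal `z_1,…,z_n`; computed by the forward recursion
`a_k = p_E(z_k)(π_00 a_{k−1} + π_10 b_{k−1})`, `b_k = p_E(1−z_k)(π_01 a_{k−1} + π_11 b_{k−1})`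
with `p_E(0) = 1/2 + δ`, `p_E(1) = 1/2 − δ`, and `p_Z^δ = a_n + b_n`. -/
noncomputable def pZ (π00 π01 π10 π11 : ℝ) (δ : ℝ) (w : List Bool) : ℝ :=
  (w.foldl
    (fun ab i =>
      ((if i then 1 / 2 - δ else 1 / 2 + δ) * (π00 * ab.1 + π10 * ab.2),
       (if i then 1 / 2 + δ else 1 / 2 - δ) * (π01 * ab.1 + π11 * ab.2)))
    (π10 / (π01 + π10), π01 / (π01 + π10))).1 +
  (w.foldl
    (fun ab i =>
      ((if i then 1 / 2 - δ else 1 / 2 + δ) * (π00 * ab.1 + π10 * ab.2),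
       (if i then 1 / 2 + δ else 1 / 2 - δ) * (π01 * ab.1 + π11 * ab.2)))
    (π10 / (π01 + π10), π01 / (π01 + π10))).2

/-- `R_n(δ) = ∑_{(z_1,…,z_n)} p_Z^δ(z_1⋯z_n) log p_Z^δ(z_1⋯z_n)`. -/
noncomputable def Rn (π00 π01 π10 π11 : ℝ) (n : ℕ) (δ : ℝ) : ℝ :=
  ∑ w : Fin n → Bool,
    pZ π00 π01 π10 π11 δ (List.ofFn w) * Real.log (pZ π00 π01 π10 π11 δ (List.ofFn w))

noncomputable def hStep (π00 π01 π10 π11 δ : ℝ) (ab : ℝ × ℝ) (i : Bool) : ℝ × ℝ :=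
  ((if i then 1 / 2 - δ else 1 / 2 + δ) * (π00 * ab.1 + π10 * ab.2),
   (if i then 1 / 2 + δ else 1 / 2 - δ) * (π01 * ab.1 + π11 * ab.2))

lemma pZ_fold (π00 π01 π10 π11 δ : ℝ) (w : List Bool) :
    pZ π00 π01 π10 π11 δ w =
      (w.foldl (hStep π00 π01 π10 π11 δ) (π10 / (π01 + π10), π01 / (π01 + π10))).1 +
      (w.foldl (hStep π00 π01 π10 π11 δ) (π10 / (π01 + π10), π01 / (π01 + π10))).2 := rfl

def sg (z : Bool) : ℝ := if z then -1 else 1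

def Sw (w : List Bool) : ℝ := (w.map sg).sum

noncomputable def Ew (lam : ℝ) (w : List Bool) : ℝ := w.foldl (fun e z => lam * e + sg z) 0

-- smoothness
lemma fold_contDiff (π00 π01 π10 π11 : ℝ) (w : List Bool) :
    ∀ g : ℝ → ℝ × ℝ, ContDiff ℝ (⊤ : ℕ∞) g →
      ContDiff ℝ (⊤ : ℕ∞) (fun δ => w.foldl (hStep π00 π01 π10 π11 δ) (g δ)) := by
  induction w with
  | nil => intro g hg; simpa using hg
  | cons z w ih =>
      intro g hg
      simp only [List.foldl_cons]
      exact ih _ (by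
        cases z <;> simp only [hStep, if_true, if_false, Bool.false_eq_true] <;> fun_prop)

lemma pZ_contDiff (π00 π01 π10 π11 : ℝ) (w : List Bool) :
    ContDiff ℝ (⊤ : ℕ∞) (fun δ => pZ π00 π01 π10 π11 δ w) := by
  have h := fold_contDiff π00 π01 π10 π11 w
    (fun _ => (π10 / (π01 + π10), π01 / (π01 + π10))) contDiff_const
  simp only [pZ_fold]
  exact (contDiff_fst.comp h).add (contDiff_snd.comp h)

lemma fold_pos (π00 π01 π10 π11 : ℝ) (h00 : 0 < π00) (h01 : 0 < π01) (h10 : 0 < π10)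
    (h11 : 0 < π11) {δ : ℝ} (hδ : |δ| < 1/2) (w : List Bool) :
    ∀ init : ℝ × ℝ, 0 < init.1 → 0 < init.2 →
      0 < (w.foldl (hStep π00 π01 π10 π11 δ) init).1 ∧
      0 < (w.foldl (hStep π00 π01 π10 π11 δ) init).2 := by
  have hp : 0 < 1/2 - δ := by rw [abs_lt] at hδ; linarith [hδ.2]
  have hm : 0 < 1/2 + δ := by rw [abs_lt] at hδ; linarith [hδ.1]
  induction w with
  | nil => intro init h1 h2; exact ⟨h1, h2⟩
  | cons z w ih =>
      intro init h1 h2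
      simp only [List.foldl_cons]
      refine ih _ ?_ ?_ <;> cases z <;> simp only [hStep, if_true, if_false, Bool.false_eq_true] <;>
        positivity

lemma fold_total (π00 π01 π10 π11 : ℝ) (hrow0 : π00 + π01 = 1) (hrow1 : π10 + π11 = 1)
    (δ : ℝ) : ∀ (n : ℕ) (init : ℝ × ℝ),
    ∑ w : Fin n → Bool, (((List.ofFn w).foldl (hStep π00 π01 π10 π11 δ) init).1 +
      ((List.ofFn w).foldl (hStep π00 π01 π10 π11 δ) init).2) = init.1 + init.2 := by
  intro n
  induction n with
  | zero => intro init; simp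
  | succ n ih =>
      intro init
      rw [← (Fin.consEquiv (fun _ : Fin (n+1) => Bool)).sum_comp (M := ℝ)]
      rw [Fintype.sum_prod_type]
      have : ∀ (b : Bool) (w : Fin n → Bool),
          List.ofFn (Fin.consEquiv (fun _ : Fin (n+1) => Bool) (b, w)) =
            b :: List.ofFn w := by
        intro b w
        simp [Fin.consEquiv, List.ofFn_succ, Fin.cons_succ]
      simp only [this, List.foldl_cons, ih]
      have e1 : π00 = 1 - π01 := by linarith
      have e2 : π11 = 1 - π10 := by linarith
      simp only [Fintype.sum_bool, hStep, if_true, if_false, Bool.false_eq_true]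
      subst e1 e2; ring

lemma sum_sg_sq (n : ℕ) :
    ∑ w : Fin n → Bool, (∑ i, sg (w i))^2 = n * 2^n ∧
      ∑ w : Fin n → Bool, (∑ i, sg (w i)) = 0 := by
  induction n with
  | zero => simp
  | succ n ih =>
      have hcard : (Finset.univ : Finset (Fin n → Bool)).card = 2^n := by
        simp [Finset.card_univ]
      have key : ∀ a : ℝ, ∑ w : Fin n → Bool, (a + ∑ i, sg (w i))^2
          = 2^n * a^2 + n * 2^n := by
        intro a
        simp only [add_sq]
        rw [Finset.sum_add_distrib, Finset.sum_add_distrib, Finset.sum_const, hcard,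
          ← Finset.mul_sum, ih.2, ih.1]
        push_cast; ring
      have hc : ∀ (b : Bool) (w : Fin n → Bool),
          ∑ i, sg ((Fin.consEquiv (fun _ : Fin (n+1) => Bool)) (b, w) i) =
            sg b + ∑ i, sg (w i) := by
        intro b w
        simp [Fin.consEquiv, Fin.sum_univ_succ, Fin.cons_succ]
      constructor <;>
        rw [← (Fin.consEquiv (fun _ : Fin (n+1) => Bool)).sum_comp (M := ℝ),
          Fintype.sum_prod_type] <;> simp only [hc] <;> rw [Fintype.sum_bool]
      · rw [key, key]
        have : sg true = -1 ∧ sg false = 1 := by norm_num [sg]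
        rw [this.1, this.2]; push_cast; ring
      · rw [Finset.sum_add_distrib, Finset.sum_add_distrib, Finset.sum_const, Finset.sum_const,
          ih.2]
        norm_num [sg]

lemma keyfold (π01 π10 : ℝ) (h01 : 0 < π01) (h10 : 0 < π10) (w : List Bool) :
    ((w.foldl (hStep (1 - π01) π01 π10 (1 - π10) 0)
        (π10 / (π01 + π10), π01 / (π01 + π10))).1 =
      (1/2)^w.length * (π10 / (π01 + π10)) ∧
     (w.foldl (hStep (1 - π01) π01 π10 (1 - π10) 0)
        (π10 / (π01 + π10), π01 / (π01 + π10))).2 =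
      (1/2)^w.length * (π01 / (π01 + π10))) ∧
    HasDerivAt (fun δ => (w.foldl (hStep (1 - π01) π01 π10 (1 - π10) δ)
        (π10 / (π01 + π10), π01 / (π01 + π10))).1)
      ((1/2)^w.length * 2 * (Sw w * ((π10 - π01)/(π01 + π10)) * (π10 / (π01 + π10)) +
        2 * (π10 / (π01 + π10) * (π01 / (π01 + π10))) * Ew (1 - π01 - π10) w)) 0 ∧
    HasDerivAt (fun δ => (w.foldl (hStep (1 - π01) π01 π10 (1 - π10) δ)
        (π10 / (π01 + π10), π01 / (π01 + π10))).2)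
      ((1/2)^w.length * 2 * (Sw w * ((π10 - π01)/(π01 + π10)) * (π01 / (π01 + π10)) -
        2 * (π10 / (π01 + π10) * (π01 / (π01 + π10))) * Ew (1 - π01 - π10) w)) 0 := by
  have hne : π01 + π10 ≠ 0 := by positivity
  induction w using List.reverseRecOn with
  | nil =>
      refine ⟨⟨by simp, by simp⟩, ?_, ?_⟩ <;>
      · simp only [List.foldl_nil, List.length_nil, Sw, Ew, List.map_nil, List.sum_nil, pow_zero]
        norm_num
        exact hasDerivAt_const 0 _
  | append_singleton w z ih =>
      obtain ⟨⟨hv1, hv2⟩, hd1, hd2⟩ := ih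
      have hSw : Sw (w ++ [z]) = Sw w + sg z := by simp [Sw]
      have hEw : Ew (1 - π01 - π10) (w ++ [z]) = (1 - π01 - π10) * Ew (1 - π01 - π10) w + sg z := by
        simp [Ew]
      have hlen : (w ++ [z]).length = w.length + 1 := by simp
      simp only [List.foldl_append, List.foldl_cons, List.foldl_nil]
      -- derivative of the scalar factors
      have hfa : HasDerivAt (fun δ : ℝ => (if z then 1/2 - δ else 1/2 + δ)) (sg z) 0 := by
        cases z <;> simp only [sg, if_true, if_false, Bool.false_eq_true] <;>
        · first
          | exact (hasDerivAt_id 0).const_sub (1/2) |>.congr_deriv (by norm_num)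
          | exact (hasDerivAt_id 0).const_add (1/2) |>.congr_deriv (by norm_num)
      have hfb : HasDerivAt (fun δ : ℝ => (if z then 1/2 + δ else 1/2 - δ)) (-sg z) 0 := by
        cases z <;> simp only [sg, if_true, if_false, Bool.false_eq_true] <;>
        · first
          | exact (hasDerivAt_id 0).const_sub (1/2) |>.congr_deriv (by norm_num)
          | exact (hasDerivAt_id 0).const_add (1/2) |>.congr_deriv (by norm_num)
      have hf0 : (if z then 1/2 - (0:ℝ) else 1/2 + (0:ℝ)) = 1/2 := by cases z <;> norm_num
      have hg0 : (if z then 1/2 + (0:ℝ) else 1/2 - (0:ℝ)) = 1/2 := by cases z <;> norm_num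
      have hinna : HasDerivAt (fun δ => (1 - π01) *
          (w.foldl (hStep (1 - π01) π01 π10 (1 - π10) δ)
            (π10 / (π01 + π10), π01 / (π01 + π10))).1 +
          π10 * (w.foldl (hStep (1 - π01) π01 π10 (1 - π10) δ)
            (π10 / (π01 + π10), π01 / (π01 + π10))).2)
          ((1 - π01) * ((1/2)^w.length * 2 * (Sw w * ((π10 - π01)/(π01 + π10)) * (π10 / (π01 + π10)) +
              2 * (π10 / (π01 + π10) * (π01 / (π01 + π10))) * Ew (1 - π01 - π10) w)) +
            π10 * ((1/2)^w.length * 2 * (Sw w * ((π10 - π01)/(π01 + π10)) * (π01 / (π01 + π10)) -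
              2 * (π10 / (π01 + π10) * (π01 / (π01 + π10))) * Ew (1 - π01 - π10) w))) 0 :=
        (hd1.const_mul _).add (hd2.const_mul _)
      have hinnb : HasDerivAt (fun δ => π01 *
          (w.foldl (hStep (1 - π01) π01 π10 (1 - π10) δ)
            (π10 / (π01 + π10), π01 / (π01 + π10))).1 +
          (1 - π10) * (w.foldl (hStep (1 - π01) π01 π10 (1 - π10) δ)
            (π10 / (π01 + π10), π01 / (π01 + π10))).2)
          (π01 * ((1/2)^w.length * 2 * (Sw w * ((π10 - π01)/(π01 + π10)) * (π10 / (π01 + π10)) +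
              2 * (π10 / (π01 + π10) * (π01 / (π01 + π10))) * Ew (1 - π01 - π10) w)) +
            (1 - π10) * ((1/2)^w.length * 2 * (Sw w * ((π10 - π01)/(π01 + π10)) * (π01 / (π01 + π10)) -
              2 * (π10 / (π01 + π10) * (π01 / (π01 + π10))) * Ew (1 - π01 - π10) w))) 0 :=
        (hd1.const_mul _).add (hd2.const_mul _)
      refine ⟨⟨?_, ?_⟩, ?_, ?_⟩
      · simp only [hStep, hf0, hv1, hv2, hlen, pow_succ]
        field_simp
        ring
      · simp only [hStep, hg0, hv1, hv2, hlen, pow_succ]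
        field_simp
        ring
      · have := hfa.fun_mul hinna
        simp only [hStep]
        refine this.congr_deriv ?_
        simp only [hf0, hv1, hv2, hlen, hSw, hEw, pow_succ]
        field_simp
        ring
      · have := hfb.fun_mul hinnb
        simp only [hStep]
        refine this.congr_deriv ?_
        simp only [hg0, hv1, hv2, hlen, hSw, hEw, pow_succ]
        field_simp
        ring

lemma pZ_zero (π00 π01 π10 π11 : ℝ) (h01 : 0 < π01) (h10 : 0 < π10)
    (hrow0 : π00 + π01 = 1) (hrow1 : π10 + π11 = 1) (w : List Bool) :
    pZ π00 π01 π10 π11 0 w = (1/2)^w.length := by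
  have e0 : π00 = 1 - π01 := by linarith
  have e1 : π11 = 1 - π10 := by linarith
  subst e0 e1
  have hne : π01 + π10 ≠ 0 := by positivity
  rw [pZ_fold, (keyfold π01 π10 h01 h10 w).1.1, (keyfold π01 π10 h01 h10 w).1.2]
  field_simp
  ring

lemma pZ_hasDerivAt_zero (π00 π01 π10 π11 : ℝ) (h01 : 0 < π01) (h10 : 0 < π10)
    (hrow0 : π00 + π01 = 1) (hrow1 : π10 + π11 = 1) (w : List Bool) :
    HasDerivAt (fun δ => pZ π00 π01 π10 π11 δ w)
      ((1/2)^w.length * 2 * (Sw w * ((π10 - π01)/(π01 + π10)))) 0 := by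
  have e0 : π00 = 1 - π01 := by linarith
  have e1 : π11 = 1 - π10 := by linarith
  subst e0 e1
  have hne : π01 + π10 ≠ 0 := by positivity
  simp only [pZ_fold]
  have h := (keyfold π01 π10 h01 h10 w).2.1.fun_add (keyfold π01 π10 h01 h10 w).2.2
  refine h.congr_deriv ?_
  field_simp
  ring

lemma Rn_deriv2 (π00 π01 π10 π11 : ℝ)
    (h00 : 0 < π00) (h01 : 0 < π01) (h10 : 0 < π10) (h11 : 0 < π11)
    (hrow0 : π00 + π01 = 1) (hrow1 : π10 + π11 = 1) (n : ℕ) :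
    deriv (deriv (Rn π00 π01 π10 π11 n)) 0
      = 4 * n * ((π10 - π01)/(π01 + π10))^2 := by
  have hne : π01 + π10 ≠ 0 := by positivity
  set c : ℝ := (π10 - π01)/(π01 + π10) with hc
  set p : (Fin n → Bool) → ℝ → ℝ := fun w δ => pZ π00 π01 π10 π11 δ (List.ofFn w) with hp
  have hsm : ∀ w, ContDiff ℝ (⊤ : ℕ∞) (p w) := fun w => pZ_contDiff _ _ _ _ _
  have hdiff : ∀ w δ, HasDerivAt (p w) (deriv (p w) δ) δ := fun w δ =>
    (((hsm w).differentiable (by simp)).differentiableAt).hasDerivAt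
  have hdiff2 : ∀ w δ, HasDerivAt (fun t => deriv (p w) t) (deriv (deriv (p w)) δ) δ := by
    intro w δ
    have h : ContDiff ℝ ((⊤:ℕ∞) : WithTop ℕ∞) (deriv^[1] (p w)) :=
      ContDiff.iterate_deriv 1 ((hsm w).of_le (by simp))
    have h2 := (h.differentiable (by simp)).differentiableAt (x := δ)
    simpa using h2.hasDerivAt
  have hpos : ∀ w δ, |δ| < 1/2 → 0 < p w δ := by
    intro w δ hδ
    have h := fold_pos π00 π01 π10 π11 h00 h01 h10 h11 hδ (List.ofFn w)
      (π10 / (π01 + π10), π01 / (π01 + π10)) (by positivity) (by positivity)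
    have := add_pos h.1 h.2
    simpa [hp, pZ_fold] using this
  have hlen : ∀ w : Fin n → Bool, (List.ofFn w).length = n := fun w => List.length_ofFn
  have hp0 : ∀ w, p w 0 = (1/2)^n := by
    intro w
    rw [hp]
    simp only [pZ_zero π00 π01 π10 π11 h01 h10 hrow0 hrow1, hlen]
  have hd0 : ∀ w, deriv (p w) 0 = (1/2)^n * 2 * ((∑ i, sg (w i)) * c) := by
    intro w
    have h := (pZ_hasDerivAt_zero π00 π01 π10 π11 h01 h10 hrow0 hrow1 (List.ofFn w)).deriv
    rw [hp]
    rw [h, hlen]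
    congr 1
    simp [Sw, List.map_ofFn, List.sum_ofFn, Function.comp, hc]
  -- the first derivative of Rn on a neighborhood of 0
  set F : ℝ → ℝ := fun δ => ∑ w : Fin n → Bool, deriv (p w) δ * (Real.log (p w δ) + 1) with hF
  have claim1 : ∀ δ : ℝ, |δ| < 1/2 → HasDerivAt (Rn π00 π01 π10 π11 n) (F δ) δ := by
    intro δ hδ
    have : Rn π00 π01 π10 π11 n = fun δ => ∑ w : Fin n → Bool, p w δ * Real.log (p w δ) := rfl
    rw [this, hF]
    refine HasDerivAt.fun_sum fun w _ => ?_
    have hne0 : p w δ ≠ 0 := (hpos w δ hδ).ne'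
    have hlog : HasDerivAt (fun t => Real.log (p w t)) ((p w δ)⁻¹ * deriv (p w) δ) δ :=
      (Real.hasDerivAt_log hne0).comp δ (hdiff w δ)
    have := (hdiff w δ).mul hlog
    refine this.congr_deriv ?_
    field_simp
  have claim2 : deriv (Rn π00 π01 π10 π11 n) =ᶠ[nhds 0] F := by
    have hmem : Set.Ioo (-(1/2) : ℝ) (1/2) ∈ nhds (0:ℝ) :=
      Ioo_mem_nhds (by norm_num) (by norm_num)
    filter_upwards [hmem] with δ hδ
    exact (claim1 δ (abs_lt.2 ⟨hδ.1, hδ.2⟩)).deriv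
  have claim3 : HasDerivAt F
      (∑ w : Fin n → Bool, (deriv (deriv (p w)) 0 * (Real.log (p w 0) + 1) +
        deriv (p w) 0 * ((p w 0)⁻¹ * deriv (p w) 0))) 0 := by
    rw [hF]
    refine HasDerivAt.fun_sum fun w _ => ?_
    have hne0 : p w 0 ≠ 0 := (hpos w 0 (by norm_num)).ne'
    have hlog : HasDerivAt (fun t => Real.log (p w t)) ((p w 0)⁻¹ * deriv (p w) 0) 0 :=
      (Real.hasDerivAt_log hne0).comp 0 (hdiff w 0)
    exact (hdiff2 w 0).mul (hlog.add_const 1)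
  have claim4 : deriv (deriv (Rn π00 π01 π10 π11 n)) 0
      = ∑ w : Fin n → Bool, (deriv (deriv (p w)) 0 * (Real.log (p w 0) + 1) +
        deriv (p w) 0 * ((p w 0)⁻¹ * deriv (p w) 0)) := by
    rw [claim2.deriv_eq]
    exact claim3.deriv
  -- total probability: the sum of p w is constantly 1
  have htot : (fun δ => ∑ w : Fin n → Bool, p w δ) = fun _ => (1:ℝ) := by
    funext δ
    have h := fold_total π00 π01 π10 π11 hrow0 hrow1 δ n (π10 / (π01 + π10), π01 / (π01 + π10))
    have : ∑ w : Fin n → Bool, p w δ =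
        ∑ w : Fin n → Bool, (((List.ofFn w).foldl (hStep π00 π01 π10 π11 δ)
          (π10 / (π01 + π10), π01 / (π01 + π10))).1 +
          ((List.ofFn w).foldl (hStep π00 π01 π10 π11 δ)
          (π10 / (π01 + π10), π01 / (π01 + π10))).2) := by
      refine Finset.sum_congr rfl fun w _ => ?_
      rw [hp]; rfl
    rw [this, h]
    field_simp
    ring
  have hder1_zero : ∀ δ, ∑ w : Fin n → Bool, deriv (p w) δ = 0 := by
    intro δ
    have h : HasDerivAt (fun δ => ∑ w : Fin n → Bool, p w δ)
        (∑ w : Fin n → Bool, deriv (p w) δ) δ := HasDerivAt.fun_sum fun w _ => hdiff w δ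
    rw [htot] at h
    exact h.unique (hasDerivAt_const δ 1)
  have hder2_zero : ∑ w : Fin n → Bool, deriv (deriv (p w)) 0 = 0 := by
    have h : HasDerivAt (fun δ => ∑ w : Fin n → Bool, deriv (p w) δ)
        (∑ w : Fin n → Bool, deriv (deriv (p w)) 0) 0 :=
      HasDerivAt.fun_sum fun w _ => hdiff2 w 0
    rw [show (fun δ => ∑ w : Fin n → Bool, deriv (p w) δ) = fun _ => (0:ℝ) from
      funext hder1_zero] at h
    exact h.unique (hasDerivAt_const 0 0)
  rw [claim4]
  rw [Finset.sum_add_distrib]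
  have e1 : ∑ w : Fin n → Bool, deriv (deriv (p w)) 0 * (Real.log (p w 0) + 1) = 0 := by
    have : ∀ w : Fin n → Bool, deriv (deriv (p w)) 0 * (Real.log (p w 0) + 1)
        = deriv (deriv (p w)) 0 * (Real.log ((1/2)^n) + 1) := by
      intro w; rw [hp0]
    rw [Finset.sum_congr rfl fun w _ => this w, ← Finset.sum_mul, hder2_zero, zero_mul]
  have e2 : ∑ w : Fin n → Bool, deriv (p w) 0 * ((p w 0)⁻¹ * deriv (p w) 0)
      = 4 * n * c^2 := by
    have hhalf : ((1/2 : ℝ))^n ≠ 0 := by positivity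
    have : ∀ w : Fin n → Bool, deriv (p w) 0 * ((p w 0)⁻¹ * deriv (p w) 0)
        = ((1/2)^n * 4 * c^2) * (∑ i, sg (w i))^2 := by
      intro w
      rw [hp0, hd0]
      field_simp
      ring
    rw [Finset.sum_congr rfl fun w _ => this w, ← Finset.mul_sum, (sum_sg_sq n).1]
    have hpow : ((1/2 : ℝ))^n * 2^n = 1 := by
      rw [← mul_pow]; norm_num
    calc (1/2:ℝ)^n * 4 * c^2 * (n * 2^n) = ((1/2:ℝ)^n * 2^n) * (4 * n * c^2) := by ring
      _ = 4 * n * c^2 := by rw [hpow, one_mul]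
  rw [e1, e2, zero_add]

lemma fn_deriv2 (π00 π01 π10 π11 : ℝ)
    (h00 : 0 < π00) (h01 : 0 < π01) (h10 : 0 < π10) (h11 : 0 < π11)
    (hrow0 : π00 + π01 = 1) (hrow1 : π10 + π11 = 1) (n : ℕ) (hn : 1 ≤ n) :
    deriv (deriv (fun t => -(Rn π00 π01 π10 π11 n t) / n)) 0
      = -4 * ((π10 - π01)/(π01 + π10))^2 := by
  have hn0 : (n : ℝ) ≠ 0 := Nat.cast_ne_zero.2 (by omega)
  have hfun : (fun t => -(Rn π00 π01 π10 π11 n t) / n)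
      = fun t => (-1/(n:ℝ)) * Rn π00 π01 π10 π11 n t := by
    funext t; ring
  rw [hfun]
  have h1 : deriv (fun t => (-1/(n:ℝ)) * Rn π00 π01 π10 π11 n t)
      = fun t => (-1/(n:ℝ)) * deriv (Rn π00 π01 π10 π11 n) t := by
    funext t; exact deriv_const_mul_field _
  rw [h1]
  have h2 : deriv (fun t => (-1/(n:ℝ)) * deriv (Rn π00 π01 π10 π11 n) t) 0
      = (-1/(n:ℝ)) * deriv (deriv (Rn π00 π01 π10 π11 n)) 0 := deriv_const_mul_field _
  rw [h2, Rn_deriv2 π00 π01 π10 π11 h00 h01 h10 h11 hrow0 hrow1 n]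
  field_simp

/-- Quadratic Taylor-type bound from a bound on the derivative of the derivative. -/
lemma taylor_quad {g g' g'' : ℝ → ℝ} {x y K : ℝ} (hK : 0 ≤ K)
    (hg : ∀ t ∈ Set.uIcc x y, HasDerivAt g (g' t) t)
    (hg' : ∀ t ∈ Set.uIcc x y, HasDerivAt g' (g'' t) t)
    (hb : ∀ t ∈ Set.uIcc x y, |g'' t| ≤ K) :
    |g y - g x - g' x * (y - x)| ≤ K * |y - x| * |y - x| := by
  have hconv : Convex ℝ (Set.uIcc x y) := convex_uIcc x y
  have hxmem : x ∈ Set.uIcc x y := Set.left_mem_uIcc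
  have hymem : y ∈ Set.uIcc x y := Set.right_mem_uIcc
  -- g' is K-Lipschitz on the interval
  have hlip : ∀ t ∈ Set.uIcc x y, |g' t - g' x| ≤ K * |y - x| := by
    intro t ht
    have := hconv.norm_image_sub_le_of_norm_hasDerivWithin_le
      (f := g') (f' := g'') (fun u hu => (hg' u hu).hasDerivWithinAt)
      (fun u hu => hb u hu) hxmem ht
    refine this.trans ?_
    have htx : ‖t - x‖ ≤ |y - x| := by
      simpa using Set.abs_sub_left_of_mem_uIcc ht
    exact mul_le_mul_of_nonneg_left htx hK
  -- apply MVT-type bound to u t = g t - g' x * t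
  have hu : ∀ t ∈ Set.uIcc x y,
      HasDerivWithinAt (fun t => g t - g' x * t) (g' t - g' x) (Set.uIcc x y) t := by
    intro t ht
    have h := ((hg t ht).sub ((hasDerivAt_id t).const_mul (g' x))).hasDerivWithinAt
      (s := Set.uIcc x y)
    simp only [mul_one, id] at h
    exact h
  have := hconv.norm_image_sub_le_of_norm_hasDerivWithin_le
    (f := fun t => g t - g' x * t) (f' := fun t => g' t - g' x) hu
    (fun u hu' => by simpa using hlip u hu') hxmem hymem
  have heq : (g y - g' x * y) - (g x - g' x * x) = g y - g x - g' x * (y - x) := by ring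
  simpa [heq] using this

open Filter Topology in
/-- Section 3.3, case 4: the second derivative of the entropy rate at `ε = 1/2`.
If the entropy rate `H(δ) = lim_n −R_n(δ)/n` exists on `(−1/2, 1/2)` and the first three
`δ`-derivatives of `−R_n(δ)/n` are bounded uniformly in `n` on a neighborhood of `δ = 0`,
then `H` is twice differentiable at `0` and
`H″(0) = −4((π_10 − π_01)/(π_10 + π_01))²`. -/
theorem second_deriv_entropy_rate_at_half (π00 π01 π10 π11 : ℝ)
    (h00 : 0 < π00) (h00' : π00 < 1) (h01 : 0 < π01) (h01' : π01 < 1)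
    (h10 : 0 < π10) (h10' : π10 < 1) (h11 : 0 < π11) (h11' : π11 < 1)
    (hrow0 : π00 + π01 = 1) (hrow1 : π10 + π11 = 1)
    (H : ℝ → ℝ)
    (hlim : ∀ δ ∈ Set.Ioo (-(1 / 2) : ℝ) (1 / 2),
      Tendsto (fun n : ℕ => -(Rn π00 π01 π10 π11 n δ) / n) atTop (𝓝 (H δ)))
    (M r : ℝ) (hM : 0 < M) (hr : 0 < r)
    (hbound : ∀ n : ℕ, 1 ≤ n → ∀ δ : ℝ, |δ| < r →
      |iteratedDeriv 1 (fun t => -(Rn π00 π01 π10 π11 n t) / n) δ| ≤ M ∧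
      |iteratedDeriv 2 (fun t => -(Rn π00 π01 π10 π11 n t) / n) δ| ≤ M ∧
      |iteratedDeriv 3 (fun t => -(Rn π00 π01 π10 π11 n t) / n) δ| ≤ M) :
    DifferentiableAt ℝ H 0 ∧ DifferentiableAt ℝ (deriv H) 0 ∧
      iteratedDeriv 2 H 0 = -4 * ((π10 - π01) / (π10 + π01)) ^ 2 := by
  classical
  have hne : π01 + π10 ≠ 0 := by positivity
  set c : ℝ := (π10 - π01) / (π01 + π10) with hc
  set f : ℕ → ℝ → ℝ := fun n t => -(Rn π00 π01 π10 π11 n t) / n with hf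
  set ρ : ℝ := min (r / 2) (1 / 4) with hρ
  have hρpos : 0 < ρ := lt_min (by linarith) (by norm_num)
  have hρr : ρ < r := lt_of_le_of_lt (min_le_left _ _) (by linarith)
  have hρhalf : ρ < 1 / 2 := lt_of_le_of_lt (min_le_right _ _) (by norm_num)
  set J : Set ℝ := Set.Icc (-ρ) ρ with hJ
  have hJr : ∀ x ∈ J, |x| < r := by
    intro x hx; rw [abs_lt]; exact ⟨by linarith [hx.1], by linarith [hx.2]⟩
  have hJhalf : ∀ x ∈ J, |x| < 1/2 := by
    intro x hx; rw [abs_lt]; exact ⟨by linarith [hx.1], by linarith [hx.2]⟩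
  have hJIoo : ∀ x ∈ J, x ∈ Set.Ioo (-(1/2) : ℝ) (1/2) := by
    intro x hx
    have := hJhalf x hx; rw [abs_lt] at this
    exact ⟨by linarith [this.1], this.2⟩
  -- regularity of f k on Ioo(-1/2,1/2)
  set S : Set ℝ := Set.Ioo (-(1/2) : ℝ) (1/2) with hS
  have hSopen : IsOpen S := isOpen_Ioo
  have hC : ∀ k : ℕ, ContDiffOn ℝ (⊤ : ℕ∞) (f k) S := by
    intro k x hx
    refine ContDiffAt.contDiffWithinAt ?_
    have hRn : ContDiffAt ℝ (⊤ : ℕ∞) (Rn π00 π01 π10 π11 k) x := by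
      have hEq : Rn π00 π01 π10 π11 k
          = fun δ => ∑ w : Fin k → Bool, pZ π00 π01 π10 π11 δ (List.ofFn w) *
            Real.log (pZ π00 π01 π10 π11 δ (List.ofFn w)) := rfl
      rw [hEq]
      refine ContDiffAt.sum fun w _ => ?_
      have hpos : 0 < pZ π00 π01 π10 π11 x (List.ofFn w) := by
        have h := fold_pos π00 π01 π10 π11 h00 h01 h10 h11
          (by rw [abs_lt]; exact ⟨by linarith [hx.1], hx.2⟩) (List.ofFn w)
          (π10 / (π01 + π10), π01 / (π01 + π10)) (by positivity) (by positivity)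
        have := add_pos h.1 h.2
        simpa [pZ_fold] using this
      exact ((pZ_contDiff π00 π01 π10 π11 (List.ofFn w)).contDiffAt).mul
        ((Real.contDiffAt_log.2 hpos.ne').comp x
          (pZ_contDiff π00 π01 π10 π11 (List.ofFn w)).contDiffAt :)
    have : f k = fun t => -(Rn π00 π01 π10 π11 k t) / k := rfl
    rw [this]
    exact (hRn.neg).div_const _
  have hC2 : ∀ k : ℕ, ContDiffOn ℝ (⊤ : ℕ∞) (deriv (f k)) S :=
    fun k => (hC k).deriv_of_isOpen hSopen (by simp)
  have hreg1 : ∀ (k : ℕ), ∀ x ∈ S, HasDerivAt (f k) (deriv (f k) x) x := fun k x hx =>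
    ((((hC k).differentiableOn (by simp)).differentiableAt (hSopen.mem_nhds hx))).hasDerivAt
  have hreg2 : ∀ (k : ℕ), ∀ x ∈ S, HasDerivAt (deriv (f k)) (deriv (deriv (f k)) x) x :=
    fun k x hx =>
    ((((hC2 k).differentiableOn (by simp)).differentiableAt (hSopen.mem_nhds hx))).hasDerivAt
  have hC3 : ∀ k : ℕ, ContDiffOn ℝ (⊤ : ℕ∞) (deriv (deriv (f k))) S :=
    fun k => (hC2 k).deriv_of_isOpen hSopen (by simp)
  have hreg3 : ∀ (k : ℕ), ∀ x ∈ S,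
      HasDerivAt (deriv (deriv (f k))) (deriv (deriv (deriv (f k))) x) x := fun k x hx =>
    ((((hC3 k).differentiableOn (by simp)).differentiableAt (hSopen.mem_nhds hx))).hasDerivAt
  -- bounds
  have hb2 : ∀ (k : ℕ), 1 ≤ k → ∀ x ∈ J, |deriv (deriv (f k)) x| ≤ M := by
    intro k hk x hx
    have h := (hbound k hk x (hJr x hx)).2.1
    rwa [show (2:ℕ) = 1 + 1 from rfl, iteratedDeriv_succ, iteratedDeriv_one] at h
  have hb3 : ∀ (k : ℕ), 1 ≤ k → ∀ x ∈ J, |deriv (deriv (deriv (f k))) x| ≤ M := by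
    intro k hk x hx
    have h := (hbound k hk x (hJr x hx)).2.2
    rwa [show (3:ℕ) = 2 + 1 from rfl, iteratedDeriv_succ,
      show (2:ℕ) = 1 + 1 from rfl, iteratedDeriv_succ, iteratedDeriv_one] at h
  have hJS : J ⊆ S := fun x hx => hJIoo x hx
  have huIcc : ∀ x ∈ J, ∀ y ∈ J, Set.uIcc x y ⊆ J := by
    intro x hx y hy
    have hle : (-ρ : ℝ) ≤ ρ := by linarith
    have hx' : x ∈ Set.uIcc (-ρ) ρ := by rw [Set.uIcc_of_le hle]; exact hx
    have hy' : y ∈ Set.uIcc (-ρ) ρ := by rw [Set.uIcc_of_le hle]; exact hy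
    intro t ht
    have := Set.uIcc_subset_uIcc hx' hy' ht
    rwa [Set.uIcc_of_le hle] at this
  -- Taylor bounds
  have T1 : ∀ (k : ℕ), 1 ≤ k → ∀ x ∈ J, ∀ y ∈ J,
      |f k y - f k x - deriv (f k) x * (y - x)| ≤ M * |y - x| * |y - x| := by
    intro k hk x hx y hy
    exact taylor_quad hM.le
      (fun t ht => hreg1 k t (hJS (huIcc x hx y hy ht)))
      (fun t ht => hreg2 k t (hJS (huIcc x hx y hy ht)))
      (fun t ht => hb2 k hk t (huIcc x hx y hy ht))
  have T2 : ∀ (k : ℕ), 1 ≤ k → ∀ x ∈ J, ∀ y ∈ J,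
      |deriv (f k) y - deriv (f k) x - deriv (deriv (f k)) x * (y - x)|
        ≤ M * |y - x| * |y - x| := by
    intro k hk x hx y hy
    exact taylor_quad hM.le
      (fun t ht => hreg2 k t (hJS (huIcc x hx y hy ht)))
      (fun t ht => hreg3 k t (hJS (huIcc x hx y hy ht)))
      (fun t ht => hb3 k hk t (huIcc x hx y hy ht))
  -- pointwise convergence of deriv (f k)
  have hcau : ∀ x ∈ J, CauchySeq (fun k => deriv (f k) x) := by
    intro x hx
    rw [Metric.cauchySeq_iff]
    intro ε hε
    set h : ℝ := min (ε / (4 * M)) ρ with hh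
    have hhpos : 0 < h := lt_min (by positivity) hρpos
    have hhM : M * h ≤ ε / 4 := by
      have h1 : h ≤ ε / (4 * M) := min_le_left _ _
      calc M * h ≤ M * (ε / (4 * M)) := by nlinarith
        _ = ε / 4 := by field_simp
    set y : ℝ := if x ≤ 0 then x + h else x - h with hy
    have hymem : y ∈ J := by
      have hh2 : h ≤ ρ := min_le_right _ _
      have hx1 := hx.1
      have hx2 := hx.2
      rw [hy]
      split_ifs with hx0
      · exact ⟨by linarith, by linarith⟩
      · exact ⟨by linarith, by linarith⟩
    have hyx : y - x = h ∨ y - x = -h := by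
      rw [hy]; split_ifs
      · left; ring
      · right; ring
    have hyne : y - x ≠ 0 := by
      rcases hyx with e | e <;> rw [e] <;> simp [hhpos.ne']
    have habs : |y - x| = h := by
      rcases hyx with e | e <;> rw [e]
      · exact abs_of_pos hhpos
      · rw [abs_neg]; exact abs_of_pos hhpos
    set q : ℕ → ℝ := fun k => (f k y - f k x) / (y - x) with hq
    have hqt : Tendsto q atTop (𝓝 ((H y - H x) / (y - x))) :=
      ((hlim y (hJIoo y hymem)).sub (hlim x (hJIoo x hx))).div_const _
    have hqc : CauchySeq q := hqt.cauchySeq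
    have hDq : ∀ k : ℕ, 1 ≤ k → |deriv (f k) x - q k| ≤ M * h := by
      intro k hk
      have hT := T1 k hk x hx y hymem
      have e : q k - deriv (f k) x
          = (f k y - f k x - deriv (f k) x * (y - x)) / (y - x) := by
        rw [hq]
        field_simp
      have : |q k - deriv (f k) x| ≤ M * h := by
        rw [e, abs_div, habs, div_le_iff₀ hhpos]
        calc |f k y - f k x - deriv (f k) x * (y - x)| ≤ M * |y - x| * |y - x| := hT
          _ = M * h * h := by rw [habs]
      rwa [abs_sub_comm] at this
    obtain ⟨N₀, hN₀⟩ := Metric.cauchySeq_iff.1 hqc (ε / 2) (by linarith)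
    refine ⟨max N₀ 1, fun m hm k hk' => ?_⟩
    have hm1 : 1 ≤ m := le_trans (le_max_right _ _) hm
    have hk1 : 1 ≤ k := le_trans (le_max_right _ _) hk'
    have hmN : N₀ ≤ m := le_trans (le_max_left _ _) hm
    have hkN : N₀ ≤ k := le_trans (le_max_left _ _) hk'
    have h4 := dist_triangle4 (deriv (f m) x) (q m) (q k) (deriv (f k) x)
    have e1 : dist (deriv (f m) x) (q m) ≤ M * h := by
      rw [Real.dist_eq]; exact hDq m hm1
    have e2 : dist (q m) (q k) < ε / 2 := hN₀ m hmN k hkN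
    have e3 : dist (q k) (deriv (f k) x) ≤ M * h := by
      rw [Real.dist_eq, abs_sub_comm]; exact hDq k hk1
    calc dist (deriv (f m) x) (deriv (f k) x)
        ≤ dist (deriv (f m) x) (q m) + dist (q m) (q k) + dist (q k) (deriv (f k) x) := h4
      _ < M * h + ε / 2 + M * h := by linarith
      _ ≤ ε := by linarith
  -- the pointwise limit of the derivatives
  set G : ℝ → ℝ := fun x => limUnder atTop (fun k => deriv (f k) x) with hG
  have hGx : ∀ x ∈ J, Tendsto (fun k => deriv (f k) x) atTop (𝓝 (G x)) :=
    fun x hx => (hcau x hx).tendsto_limUnder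
  -- Taylor bound for H
  have hHT : ∀ x ∈ J, ∀ y ∈ J,
      |H y - H x - G x * (y - x)| ≤ M * |y - x| * |y - x| := by
    intro x hx y hy
    have htends : Tendsto (fun k => |f k y - f k x - deriv (f k) x * (y - x)|) atTop
        (𝓝 (|H y - H x - G x * (y - x)|)) :=
      (((hlim y (hJIoo y hy)).sub (hlim x (hJIoo x hx))).sub
        ((hGx x hx).mul_const (y - x))).abs
    refine le_of_tendsto htends ?_
    filter_upwards [eventually_ge_atTop 1] with k hk
    exact T1 k hk x hx y hy
  -- Taylor bound for G at 0 with the computed second derivative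
  have h0J : (0 : ℝ) ∈ J := ⟨by linarith, by linarith⟩
  have hd2c : ∀ k : ℕ, 1 ≤ k → deriv (deriv (f k)) 0 = -4 * c ^ 2 :=
    fun k hk => fn_deriv2 π00 π01 π10 π11 h00 h01 h10 h11 hrow0 hrow1 k hk
  have hGT : ∀ y ∈ J, |G y - G 0 - (-4 * c ^ 2) * (y - 0)| ≤ M * |y - 0| * |y - 0| := by
    intro y hy
    have htends : Tendsto
        (fun k => |deriv (f k) y - deriv (f k) 0 - (-4 * c ^ 2) * (y - 0)|) atTop
        (𝓝 (|G y - G 0 - (-4 * c ^ 2) * (y - 0)|)) :=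
      (((hGx y hy).sub (hGx 0 h0J)).sub tendsto_const_nhds).abs
    refine le_of_tendsto htends ?_
    filter_upwards [eventually_ge_atTop 1] with k hk
    have := T2 k hk 0 h0J y hy
    rwa [hd2c k hk] at this
  -- H has derivative G x at interior points
  have hH' : ∀ x ∈ Set.Ioo (-ρ) ρ, HasDerivAt H (G x) x := by
    intro x hx
    rw [hasDerivAt_iff_isLittleO]
    have hxJ : x ∈ J := ⟨hx.1.le, hx.2.le⟩
    have hmem : J ∈ nhds x := Icc_mem_nhds hx.1 hx.2
    have h1 : (fun y => H y - H x - (y - x) • G x) =O[nhds x] fun y => (y - x) ^ 2 := by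
      rw [Asymptotics.isBigO_iff]
      refine ⟨M, ?_⟩
      filter_upwards [hmem] with y hy
      have := hHT x hxJ y hy
      rw [Real.norm_eq_abs, Real.norm_eq_abs, smul_eq_mul, mul_comm (y - x) (G x), sq,
        abs_mul, ← mul_assoc]
      exact this
    have h2 : (fun y : ℝ => (y - x) ^ 2) =o[nhds x] fun y => y - x := by
      have h3 : (fun t : ℝ => t ^ 2) =o[nhds 0] fun t : ℝ => t :=
        Asymptotics.isLittleO_pow_id (by norm_num)
      have h4 : Tendsto (fun y : ℝ => y - x) (nhds x) (nhds 0) := by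
        have := (continuous_id.fun_sub (continuous_const (y := x))).tendsto x
        simpa using this
      simpa [Function.comp_def] using h3.comp_tendsto h4
    exact h1.trans_isLittleO h2
  have h0mem : (0 : ℝ) ∈ Set.Ioo (-ρ) ρ := ⟨by linarith, hρpos⟩
  have hdiffH : DifferentiableAt ℝ H 0 := (hH' 0 h0mem).differentiableAt
  have hevG : deriv H =ᶠ[nhds 0] G := by
    filter_upwards [Ioo_mem_nhds (by linarith : -ρ < (0:ℝ)) hρpos] with y hy
    exact (hH' y hy).deriv
  -- G has derivative -4c² at 0
  have hGd : HasDerivAt G (-4 * c ^ 2) 0 := by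
    rw [hasDerivAt_iff_isLittleO]
    have hmem : J ∈ nhds (0 : ℝ) := Icc_mem_nhds (by linarith) hρpos
    have h1 : (fun y => G y - G 0 - (y - 0) • (-4 * c ^ 2)) =O[nhds 0]
        fun y => (y - 0) ^ 2 := by
      rw [Asymptotics.isBigO_iff]
      refine ⟨M, ?_⟩
      filter_upwards [hmem] with y hy
      have := hGT y hy
      rw [Real.norm_eq_abs, Real.norm_eq_abs, smul_eq_mul, mul_comm (y - 0) (-4 * c ^ 2),
        pow_two (y - (0:ℝ)), abs_mul, ← mul_assoc]
      exact this
    have h2 : (fun y : ℝ => (y - 0) ^ 2) =o[nhds (0:ℝ)] fun y => y - 0 := by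
      have h3 : (fun t : ℝ => t ^ 2) =o[nhds 0] fun t : ℝ => t :=
        Asymptotics.isLittleO_pow_id (by norm_num)
      have h4 : Tendsto (fun y : ℝ => y - 0) (nhds (0:ℝ)) (nhds 0) := by
        have := (continuous_id.fun_sub (continuous_const (y := (0:ℝ)))).tendsto 0
        simpa using this
      simpa [Function.comp_def] using h3.comp_tendsto h4
    exact h1.trans_isLittleO h2
  have hdiffG : DifferentiableAt ℝ G 0 := hGd.differentiableAt
  refine ⟨hdiffH, ?_, ?_⟩
  · exact hdiffG.congr_of_eventuallyEq hevG
  · have e : iteratedDeriv 2 H = deriv (deriv H) := by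
      conv_lhs => rw [show (2:ℕ) = 1 + 1 from rfl]
      rw [iteratedDeriv_succ, iteratedDeriv_one]
    rw [e, hevG.deriv_eq, hGd.deriv, hc, add_comm π01 π10]
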